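/- arXiv:2406.03286 — 3 statements merged into one kernel-verified Lean document; each statement's English description precedes it below -/
import Mathlib

section
/- For every solution x(·) of the nonlinear multiagent system and all times s ≥ t ≥ 0, the convex hulls of the agent positions are nested: conv{x_1(s),…,x_N(s)} ⊆ conv{x_1(t),…,x_N(t)}. -/
open MeasureTheory Finset

noncomputable section

/-- Diameter of a configuration of `N` agents in `ℝ^d`. -/
def mDiam {N d : ℕ} (x : Fin N → EuclideanSpace ℝ (Fin d)) : ℝ :=
  ⨆ i : Fin N, ⨆ j : Fin N, ‖x i - x j‖

/-- Variance of a configuration of `N` agents in `ℝ^d`. -/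
def mVar {N d : ℕ} (x : Fin N → EuclideanSpace ℝ (Fin d)) : ℝ :=
  (N : ℝ)⁻¹ * ∑ i : Fin N, ‖x i - (N : ℝ)⁻¹ • ∑ k : Fin N, x k‖ ^ 2

/-- Admissible interaction signals: measurable, valued in `[0,1]` on `[0,∞)`. -/
def ValidSignal (N : ℕ) (a : Fin N → Fin N → ℝ → ℝ) : Prop :=
  ∀ i j, Measurable (a i j) ∧ ∀ t : ℝ, 0 ≤ t → a i j t ∈ Set.Icc (0 : ℝ) 1

/-- Admissible kernels: locally Lipschitz and positive on `[0,∞)`. -/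
def ValidKernel (φ : ℝ → ℝ) : Prop :=
  LocallyLipschitz φ ∧ ∀ r : ℝ, 0 ≤ r → 0 < φ r

/-- Solutions of the nonlinear multiagent system
`ẋ_i(t) = (1/N) ∑_j a_{ij}(t) φ(|x_i(t) − x_j(t)|)(x_j(t) − x_i(t))` for a.e. `t ≥ 0`,
as locally Lipschitz curves on `[0,∞)`. -/
def IsMASol {N d : ℕ} (a : Fin N → Fin N → ℝ → ℝ) (φ : ℝ → ℝ)
    (x : Fin N → ℝ → EuclideanSpace ℝ (Fin d)) : Prop :=
  (∀ i, ∀ r : ℝ, 0 < r → ∃ K : NNReal, LipschitzOnWith K (x i) (Set.Icc 0 r)) ∧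
  (∀ᵐ t ∂(volume : Measure ℝ), 0 ≤ t → ∀ i, HasDerivAt (x i)
    ((N : ℝ)⁻¹ • ∑ j : Fin N, (a i j t * φ ‖x i t - x j t‖) • (x j t - x i t)) t)

/-- The scrambling coefficient of an `N × N` matrix. -/
def scrambling {N : ℕ} (A : Fin N → Fin N → ℝ) : ℝ :=
  ⨅ i : Fin N, ⨅ j : Fin N, (N : ℝ)⁻¹ * ∑ k : Fin N, min (A i k) (A j k)

/-- Scrambling-persistent signals: the scrambling coefficient of the averaged matrix
over every window `[t, t+τ]` is at least `μ`. -/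
def ScramblingPersistent (N : ℕ) (τ μ : ℝ) (a : Fin N → Fin N → ℝ → ℝ) : Prop :=
  ValidSignal N a ∧
  ∀ t : ℝ, 0 ≤ t → μ ≤ scrambling (fun i j => τ⁻¹ * ∫ s in t..t + τ, a i j s)

/-- A matrix is balanced if its in- and out-degrees coincide. -/
def IsBalanced {N : ℕ} (A : Fin N → Fin N → ℝ) : Prop :=
  ∀ i, ∑ j : Fin N, A i j = ∑ j : Fin N, A j i

/-- The algebraic connectivity of a (balanced) matrix: the largest `λ` such that
`(1/(2N²)) ∑_{ij} a_{ij} |x_i − x_j|² ≥ λ V(x)` for all configurations `x`. -/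
def lambda2 (d : ℕ) {N : ℕ} (A : Fin N → Fin N → ℝ) : ℝ :=
  sSup {lam : ℝ | ∀ x : Fin N → EuclideanSpace ℝ (Fin d),
    lam * mVar x ≤ (2 * (N : ℝ) ^ 2)⁻¹ * ∑ i : Fin N, ∑ j : Fin N, A i j * ‖x i - x j‖ ^ 2}

/-- Connectivity-persistent balanced signals. -/
def ConnectivityPersistent (N d : ℕ) (τ μ : ℝ) (a : Fin N → Fin N → ℝ → ℝ) : Prop :=
  ValidSignal N a ∧
  (∀ᵐ t ∂(volume : Measure ℝ), 0 ≤ t → IsBalanced (fun i j => a i j t)) ∧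
  ∀ t : ℝ, 0 ≤ t → μ ≤ lambda2 d (fun i j => τ⁻¹ * ∫ s in t..t + τ, a i j s)

/-- Solutions of the linear multiagent system
`ẋ_i(t) = (1/N) ∑_j a_{ij}(t) (x_j(t) − x_i(t))` for a.e. `t ≥ 0`. -/
def IsLinSol {N d : ℕ} (a : Fin N → Fin N → ℝ → ℝ)
    (x : Fin N → ℝ → EuclideanSpace ℝ (Fin d)) : Prop :=
  (∀ i, ∀ r : ℝ, 0 < r → ∃ K : NNReal, LipschitzOnWith K (x i) (Set.Icc 0 r)) ∧
  (∀ᵐ t ∂(volume : Measure ℝ), 0 ≤ t → ∀ i, HasDerivAt (x i)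
    ((N : ℝ)⁻¹ • ∑ j : Fin N, a i j t • (x j t - x i t)) t)

/-!
Separate a point from the convex hull at time `t` by a continuous linear functional `ℓ`. The
envelope `τ ↦ maxⱼ ℓ(xⱼ(τ))` is Lipschitz, hence absolutely continuous, and wherever it is
differentiable its derivative is `ℓ(ẋⱼ)` for an agent `j` attaining the maximum; that velocity
is a nonnegative combination of the vectors `xₖ − xⱼ`, on which `ℓ` is `≤ 0`. So the envelope
does not increase, and no agent can cross the separating hyperplane.
-/

theorem AbsolutelyContinuousOnInterval.le_of_ae_deriv_nonpos {f : ℝ → ℝ} {a b : ℝ}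
    (hf : AbsolutelyContinuousOnInterval f a b) (hab : a ≤ b)
    (hd : ∀ᵐ τ, τ ∈ Set.Icc a b → deriv f τ ≤ 0) : f b ≤ f a := by
  have hint : ∫ τ in a..b, deriv f τ ≤ 0 := by
    simpa using intervalIntegral.integral_mono_ae_restrict hab hf.intervalIntegrable_deriv
      intervalIntegrable_const ((ae_restrict_iff' measurableSet_Icc).2 hd)
  linarith [hf.integral_deriv_eq_sub]

theorem LipschitzOnWith.finset_sup' {ι α : Type*} [PseudoMetricSpace α] {s : Finset ι}
    (hs : s.Nonempty) {F : ι → α → ℝ} {K : NNReal} {S : Set α}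
    (hF : ∀ i ∈ s, LipschitzOnWith K (F i) S) :
    LipschitzOnWith K (fun y => s.sup' hs (F · y)) S := by
  simp_rw [← Finset.sup'_apply]
  refine Finset.sup'_induction hs F (p := fun g => LipschitzOnWith K g S) (fun g hg h hh => ?_) hF
  rw [lipschitzOnWith_iff_restrict] at *
  exact max_self K ▸ hg.max hh

theorem deriv_eq_of_hasDerivAt_of_forall_le_of_eq {f g : ℝ → ℝ} {f' τ : ℝ}
    (hf : HasDerivAt f f' τ) (hg : DifferentiableAt ℝ g τ) (hle : ∀ σ, f σ ≤ g σ)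
    (heq : f τ = g τ) :
    deriv g τ = f' := by
  have hmin : IsLocalMin (fun σ => g σ - f σ) τ :=
    Filter.Eventually.of_forall fun σ => by simpa [heq] using hle σ
  have := hmin.deriv_eq_zero
  rw [deriv_fun_sub hg hf.differentiableAt, hf.deriv] at this
  linarith

theorem LinearMap.map_smul_sum_smul_sub_nonpos {ι E : Type*} [Fintype ι] [AddCommGroup E]
    [Module ℝ E] (ℓ : E →ₗ[ℝ] ℝ) {c : ℝ} (hc : 0 ≤ c) {w : ι → ℝ} (hw : ∀ k, 0 ≤ w k)
    (y : ι → E) {j : ι} (hj : ∀ k, ℓ (y k) ≤ ℓ (y j)) :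
    ℓ (c • ∑ k, w k • (y k - y j)) ≤ 0 := by
  simp only [map_smul, map_sum, map_sub, smul_eq_mul]
  exact mul_nonpos_of_nonneg_of_nonpos hc
    (sum_nonpos fun k _ => mul_nonpos_of_nonneg_of_nonpos (hw k) (sub_nonpos.2 (hj k)))

theorem mem_convexHull_range_of_forall_le_sup' {ι E : Type*} [Fintype ι] [Nonempty ι]
    [NormedAddCommGroup E] [NormedSpace ℝ E] (p : ι → E) (y : E)
    (h : ∀ ℓ : E →L[ℝ] ℝ, ℓ y ≤ univ.sup' univ_nonempty fun i => ℓ (p i)) :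
    y ∈ convexHull ℝ (Set.range p) := by
  by_contra hy
  obtain ⟨ℓ, u, hlt, hgt⟩ := geometric_hahn_banach_closed_point (convex_convexHull ℝ _)
    ((Set.finite_range p).isCompact_convexHull ℝ).isClosed hy
  have hsup : (univ.sup' univ_nonempty fun i => ℓ (p i)) < u :=
    (sup'_lt_iff _).2 fun i _ => hlt _ (subset_convexHull ℝ _ ⟨i, rfl⟩)
  linarith [h ℓ]

theorem IsMASol.sup'_map_le {N d : ℕ} [Nonempty (Fin N)] {a : Fin N → Fin N → ℝ → ℝ}
    {φ : ℝ → ℝ} {x : Fin N → ℝ → EuclideanSpace ℝ (Fin d)} (hx : IsMASol a φ x)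
    (ha : ∀ i j τ, 0 ≤ τ → 0 ≤ a i j τ) (hφ : ∀ r, 0 ≤ r → 0 ≤ φ r)
    (ℓ : EuclideanSpace ℝ (Fin d) →L[ℝ] ℝ) {t s : ℝ} (ht : 0 ≤ t) (hts : t ≤ s) :
    (univ.sup' univ_nonempty fun j => ℓ (x j s)) ≤ univ.sup' univ_nonempty fun j => ℓ (x j t) := by
  set g : ℝ → ℝ := fun τ => univ.sup' univ_nonempty fun j => ℓ (x j τ)
  choose K hK using fun j => hx.1 j (s + 1) (by linarith)
  have hg : LipschitzOnWith (‖ℓ‖₊ * univ.sup K) g (Set.uIcc t s) := by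
    refine LipschitzOnWith.finset_sup' _ fun j _ => ?_
    refine ((ℓ.lipschitz.comp_lipschitzOnWith (hK j)).weaken ?_).mono ?_
    · gcongr
      exact le_sup (mem_univ j)
    · rw [Set.uIcc_of_le hts]
      exact Set.Icc_subset_Icc ht (by linarith)
  refine hg.absolutelyContinuousOnInterval.le_of_ae_deriv_nonpos hts ?_
  filter_upwards [hx.2] with τ hode hτ
  have hτ0 : 0 ≤ τ := ht.trans hτ.1
  by_cases hdiff : DifferentiableAt ℝ g τ
  · obtain ⟨j, -, hj⟩ := exists_mem_eq_sup' univ_nonempty fun j => ℓ (x j τ)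
    have hjmax : ∀ k, ℓ (x k τ) ≤ ℓ (x j τ) := fun k =>
      hj ▸ le_sup' (fun k => ℓ (x k τ)) (mem_univ k)
    rw [deriv_eq_of_hasDerivAt_of_forall_le_of_eq (ℓ.hasFDerivAt.comp_hasDerivAt τ (hode hτ0 j))
      hdiff (fun σ => le_sup' (fun k => ℓ (x k σ)) (mem_univ j)) hj.symm]
    exact (ℓ : EuclideanSpace ℝ (Fin d) →ₗ[ℝ] ℝ).map_smul_sum_smul_sub_nonpos (by positivity)
      (fun k => mul_nonneg (ha j k τ hτ0) (hφ _ (norm_nonneg _))) (fun k => x k τ) hjmax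
  · -- `deriv` is `0` by convention where `g` is not differentiable
    rw [deriv_zero_of_not_differentiableAt hdiff]

theorem convexHull_nested_general {N d : ℕ}
    (a : Fin N → Fin N → ℝ → ℝ) (φ : ℝ → ℝ)
    (ha : ValidSignal N a) (hφ : ValidKernel φ)
    (x : Fin N → ℝ → EuclideanSpace ℝ (Fin d)) (hx : IsMASol a φ x)
    (t s : ℝ) (ht : 0 ≤ t) (hts : t ≤ s) :
    convexHull ℝ (Set.range fun i => x i s) ⊆ convexHull ℝ (Set.range fun i => x i t) := by
  refine convexHull_min ?_ (convex_convexHull ℝ _)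
  rintro _ ⟨i, rfl⟩
  have : Nonempty (Fin N) := ⟨i⟩
  refine mem_convexHull_range_of_forall_le_sup' _ _ fun ℓ => ?_
  calc ℓ (x i s) ≤ univ.sup' univ_nonempty (fun j => ℓ (x j s)) :=
        le_sup' (fun j => ℓ (x j s)) (mem_univ i)
    _ ≤ univ.sup' univ_nonempty (fun j => ℓ (x j t)) :=
        hx.sup'_map_le (fun i j τ hτ => ((ha i j).2 τ hτ).1) (fun r hr => (hφ.2 r hr).le) ℓ ht hts

/-- Along any solution of the nonlinear multiagent system, the convex hulls
of the agents' positions are nested in time. -/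
theorem convexHull_nested {N d : ℕ} (hN : 1 ≤ N)
    (a : Fin N → Fin N → ℝ → ℝ) (φ : ℝ → ℝ)
    (ha : ValidSignal N a) (hφ : ValidKernel φ)
    (x : Fin N → ℝ → EuclideanSpace ℝ (Fin d)) (hx : IsMASol a φ x)
    (t s : ℝ) (ht : 0 ≤ t) (hts : t ≤ s) :
    convexHull ℝ (Set.range fun i => x i s) ⊆ convexHull ℝ (Set.range fun i => x i t) :=
  convexHull_nested_general a φ ha hφ x hx t s ht hts
end
end

section
/- Let (A^n(·)) be any sequence in G_{λ₂}(τ,μ). Then there exist a subsequence (not relabelled) and a signal A(·) ∈ G_{λ₂}(τ,μ) such that, for each pair of indices (i,j) and every integrable function f ∈ L¹([0,∞),ℝ), one has ∫_0^∞ a^n_{ij}(t) f(t) dt → ∫_0^∞ a_{ij}(t) f(t) dt as n → ∞ (i.e., G_{λ₂}(τ,μ) is sequentially compact for the weak-* topology of L^∞([0,∞), ℝ^{N×N})). -/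
open MeasureTheory Finset

noncomputable section

/-!
Integrate each entry: the cumulative weights `t ↦ ∫₀ᵗ aᵢⱼ` are 1-Lipschitz and vanish at `0`,
so by Arzelà–Ascoli a subsequence converges locally uniformly to 1-Lipschitz limits `Gᵢⱼ`, and the
limit signal is `bᵢⱼ := Gᵢⱼ'`. Integration by parts (for absolutely continuous functions) gives
`∫ aⁿᵢⱼ g → ∫ bᵢⱼ g` for smooth compactly supported `g`; the pairings `g ↦ ∫ aⁿᵢⱼ g` are uniformly
Lipschitz on `L¹`, so the convergence extends to the closure of these `g`, which is all of `L¹`.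
Window averages are differences of cumulative weights, hence converge entrywise, and the
inequalities `μ V(x) ≤ (1/(2N²)) ∑ aᵢⱼ |xᵢ - xⱼ|²` defining `λ₂ ≥ μ` pass to the limit.
Balancedness is a linear identity between the `Gᵢⱼ`, hence between their derivatives.
-/

section
open Set Filter Topology
open scoped NNReal ContDiff

theorem exists_subseq_tendsto_of_lipschitzWith {X Y : Type*} [PseudoMetricSpace X]
    [ProperSpace X] [PseudoMetricSpace Y] [ProperSpace Y] {K : ℝ≥0} {F : ℕ → X → Y}
    (hF : ∀ n, LipschitzWith K (F n)) (hb : ∀ x, Bornology.IsBounded (range fun n => F n x)) :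
    ∃ G : X → Y, LipschitzWith K G ∧ ∃ ψ : ℕ → ℕ, StrictMono ψ ∧
      ∀ x, Tendsto (fun n => F (ψ n) x) atTop (𝓝 (G x)) := by
  set S : Set C(X, Y) := {f | LipschitzWith K f ∧ ∀ x, f x ∈ closure (range fun n => F n x)}
  have himage : ContinuousMap.toFun '' S =
      {f : X → Y | LipschitzWith K f} ∩ univ.pi fun x => closure (range fun n => F n x) := by
    ext f
    constructor
    · rintro ⟨g, hg, rfl⟩
      exact ⟨hg.1, fun x _ => hg.2 x⟩
    · rintro ⟨hf, hfx⟩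
      exact ⟨⟨f, hf.continuous⟩, ⟨hf, fun x => hfx x trivial⟩, rfl⟩
  have hS : IsCompact S := by
    refine ArzelaAscoli.isCompact_of_equicontinuous S ?_ ?_
    · rw [himage]
      exact (isCompact_univ_pi fun x => (hb x).isCompact_closure).inter_left
        (isClosed_setOfPred_lipschitzWith K)
    · exact (LipschitzWith.uniformEquicontinuous _ K fun f => f.2.1).equicontinuous
  obtain ⟨G, hG, ψ, hψ, hlim⟩ := hS.tendsto_subseq (x := fun n => ⟨F n, (hF n).continuous⟩)
    fun n => ⟨hF n, fun x => subset_closure ⟨n, rfl⟩⟩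
  exact ⟨G, hG.1, ψ, hψ, fun x => ((continuous_eval_const x).tendsto G).comp hlim⟩

theorem lipschitzWith_integral_mul_L1 {α : Type*} [MeasurableSpace α] {ν : Measure α}
    {c : α → ℝ} {K : ℝ≥0} (hc : AEStronglyMeasurable c ν) (hcK : ∀ t, ‖c t‖ ≤ K) :
    LipschitzWith K fun u : α →₁[ν] ℝ => ∫ t, c t * u t ∂ν := by
  have hint : ∀ w : α →₁[ν] ℝ, Integrable (fun t => c t * w t) ν :=
    fun w => (L1.integrable_coeFn w).bdd_mul hc (ae_of_all _ hcK)
  refine LipschitzWith.of_dist_le_mul fun u v => ?_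
  calc dist (∫ t, c t * u t ∂ν) (∫ t, c t * v t ∂ν)
      = ‖∫ t, c t * (u - v) t ∂ν‖ := by
        rw [dist_eq_norm, ← integral_sub (hint u) (hint v)]
        refine congrArg norm (integral_congr_ae ?_)
        filter_upwards [Lp.coeFn_sub u v] with t ht
        rw [ht, Pi.sub_apply, mul_sub]
    _ ≤ ∫ t, K * ‖(u - v) t‖ ∂ν := by
        refine norm_integral_le_of_norm_le ((L1.integrable_coeFn _).norm.const_mul _)
          (ae_of_all _ fun t => ?_)
        rw [norm_mul]
        exact mul_le_mul_of_nonneg_right (hcK t) (norm_nonneg _)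
    _ = K * dist u v := by rw [integral_const_mul, dist_eq_norm, L1.norm_eq_integral_norm]

theorem integral_deriv_mul_eq_neg_intervalIntegral {f g : ℝ → ℝ} {K : ℝ≥0} {a b : ℝ}
    (hf : LipschitzWith K f) (hg : ContDiff ℝ 1 g) (hab : a ≤ b) (hgab : tsupport g ⊆ Ioo a b) :
    ∫ t, deriv f t * g t = -∫ t in a..b, f t * deriv g t := by
  have hg0 : ∀ t ∉ Ioo a b, g t = 0 := fun t ht => image_eq_zero_of_notMem_tsupport (hgab.mt ht)
  have hparts := (hf.lipschitzOnWith (s := uIcc a b)).absolutelyContinuousOnInterval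
    |>.integral_mul_deriv_eq_deriv_mul hg.contDiffOn.absolutelyContinuousOnInterval
  rw [hg0 a (by simp), hg0 b (by simp)] at hparts
  rw [← setIntegral_eq_integral_of_forall_compl_eq_zero (s := Ioc a b) fun t ht => by
    rw [hg0 t fun h => ht (Ioo_subset_Ioc_self h), mul_zero], ← intervalIntegral.integral_of_le hab]
  linarith

section WeakStar

variable {K : ℝ≥0} {F : ℕ → ℝ → ℝ} {G : ℝ → ℝ}

theorem tendsto_integral_deriv_mul_of_contDiff (hF : ∀ n, LipschitzWith K (F n))
    (hG : LipschitzWith K G) (hlim : ∀ t, Tendsto (fun n => F n t) atTop (𝓝 (G t)))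
    {g : ℝ → ℝ} (hg : ContDiff ℝ 1 g) (hgc : HasCompactSupport g) :
    Tendsto (fun n => ∫ t, deriv (F n) t * g t) atTop (𝓝 (∫ t, deriv G t * g t)) := by
  obtain ⟨r, hr, hgr⟩ := hgc.isCompact.isBounded.subset_ball_lt 0 0
  rw [Real.ball_eq_Ioo, zero_sub, zero_add] at hgr
  simp only [integral_deriv_mul_eq_neg_intervalIntegral (hF _) hg (by linarith) hgr,
    integral_deriv_mul_eq_neg_intervalIntegral hG hg (by linarith) hgr]
  obtain ⟨C, hC⟩ := isBounded_iff_forall_norm_le.1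
    (Metric.isBounded_range_of_tendsto _ (hlim 0))
  have hdg : Continuous (deriv g) := hg.continuous_deriv le_rfl
  refine (intervalIntegral.tendsto_integral_filter_of_dominated_convergence
    (fun t => (C + K * r) * ‖deriv g t‖) (Eventually.of_forall fun n =>
      ((hF n).continuous.mul hdg).aestronglyMeasurable) (Eventually.of_forall fun n =>
      ae_of_all _ fun t ht => ?_) ((hdg.norm.const_mul _).intervalIntegrable _ _)
    (ae_of_all _ fun t _ => (hlim t).mul_const _)).neg
  rw [Pi.mul_apply, norm_mul]
  refine mul_le_mul_of_nonneg_right ?_ (norm_nonneg _)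
  have ht' : |t| ≤ r := by
    rw [uIoc_of_le (by linarith)] at ht
    exact abs_le.2 ⟨by linarith [ht.1], ht.2⟩
  calc ‖F n t‖ ≤ ‖F n 0‖ + ‖F n t - F n 0‖ := norm_le_insert' _ _
    _ ≤ C + K * ‖t - 0‖ := add_le_add (hC _ ⟨n, rfl⟩) ((hF n).norm_sub_le t 0)
    _ ≤ C + K * r := by
        rw [sub_zero, Real.norm_eq_abs]
        gcongr

theorem tendsto_integral_deriv_mul (hF : ∀ n, LipschitzWith K (F n))
    (hG : LipschitzWith K G) (hlim : ∀ t, Tendsto (fun n => F n t) atTop (𝓝 (G t)))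
    {g : ℝ → ℝ} (hg : Integrable g) :
    Tendsto (fun n => ∫ t, deriv (F n) t * g t) atTop (𝓝 (∫ t, deriv G t * g t)) := by
  have hpair : ∀ f : ℝ → ℝ, LipschitzWith K f →
      LipschitzWith K fun u : ℝ →₁[volume] ℝ => ∫ t, deriv f t * u t := fun f hf =>
    lipschitzWith_integral_mul_L1 (measurable_deriv f).aestronglyMeasurable
      fun t => norm_deriv_le_of_lipschitz hf
  have hclosed : IsClosed {u : ℝ →₁[volume] ℝ |
      Tendsto (fun n => ∫ t, deriv (F n) t * u t) atTop (𝓝 (∫ t, deriv G t * u t))} :=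
    (LipschitzWith.uniformEquicontinuous _ K fun n => hpair _ (hF n)).equicontinuous
      |>.isClosed_setOfPred_tendsto (hpair G hG).continuous
  have hsmooth : {u : ℝ →₁[volume] ℝ | ∃ g : ℝ → ℝ, u =ᵐ[volume] g ∧ HasCompactSupport g ∧
      ContDiff ℝ ∞ g} ⊆ {u | Tendsto (fun n => ∫ t, deriv (F n) t * u t) atTop
        (𝓝 (∫ t, deriv G t * u t))} := by
    rintro u ⟨g, hug, hgc, hg⟩
    have hcongr : ∀ f : ℝ → ℝ, ∫ t, deriv f t * u t = ∫ t, deriv f t * g t := fun f =>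
      integral_congr_ae (hug.mono fun t ht => congrArg (deriv f t * ·) ht)
    simp only [mem_ofPred_eq, hcongr]
    exact tendsto_integral_deriv_mul_of_contDiff hF hG hlim (hg.of_le (by simp)) hgc
  have hall := hclosed.closure_subset_iff.2 hsmooth
    (Lp.dense_hasCompactSupport_contDiff (E := ℝ) (μ := volume) ENNReal.one_ne_top (hg.toL1 g))
  have hcongr : ∀ f : ℝ → ℝ, ∫ t, deriv f t * (hg.toL1 g) t = ∫ t, deriv f t * g t := fun f =>
    integral_congr_ae (hg.coeFn_toL1.mono fun t ht => congrArg (deriv f t * ·) ht)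
  simpa only [mem_ofPred_eq, hcongr] using hall

end WeakStar

lemma lipschitzWith_primitive {c : ℝ → ℝ} {K : ℝ≥0} (hc : LocallyIntegrable c)
    (hcK : ∀ t, ‖c t‖ ≤ K) (a : ℝ) : LipschitzWith K fun t => ∫ s in a..t, c s := by
  refine LipschitzWith.of_dist_le_mul fun u v => ?_
  rw [dist_eq_norm, intervalIntegral.integral_interval_sub_left
    (hc.integrableOn_isCompact isCompact_uIcc).intervalIntegrable
    (hc.integrableOn_isCompact isCompact_uIcc).intervalIntegrable, Real.dist_eq]
  exact intervalIntegral.norm_integral_le_of_norm_le_const fun s _ => hcK s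

lemma monotone_primitive {c : ℝ → ℝ} (hc : LocallyIntegrable c) (hc0 : ∀ t, 0 ≤ c t) (a : ℝ) :
    Monotone fun t => ∫ s in a..t, c s := fun u v huv => by
  rw [← sub_nonneg, intervalIntegral.integral_interval_sub_left
    (hc.integrableOn_isCompact isCompact_uIcc).intervalIntegrable
    (hc.integrableOn_isCompact isCompact_uIcc).intervalIntegrable]
  exact intervalIntegral.integral_nonneg huv fun s _ => hc0 s

def ValidWeight (a : ℝ → ℝ) : Prop :=
  Measurable a ∧ ∀ t : ℝ, 0 ≤ t → a t ∈ Icc (0 : ℝ) 1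

lemma ValidSignal.validWeight {N : ℕ} {a : Fin N → Fin N → ℝ → ℝ} (h : ValidSignal N a)
    (i j : Fin N) : ValidWeight (a i j) :=
  h i j

/-- Signals are only constrained on `[0,∞)`, so they are cut off at negative times before being
integrated. -/
def cumulative (a : ℝ → ℝ) (t : ℝ) : ℝ := ∫ s in (0 : ℝ)..t, (Set.Ici 0).indicator a s

lemma cumulative_zero (a : ℝ → ℝ) : cumulative a 0 = 0 := intervalIntegral.integral_same

namespace ValidWeight

variable {a : ℝ → ℝ} (ha : ValidWeight a)
include ha

lemma indicator_mem_Icc (t : ℝ) : (Set.Ici 0).indicator a t ∈ Icc (0 : ℝ) 1 := by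
  by_cases ht : 0 ≤ t
  · simpa [indicator_of_mem (Set.mem_Ici.2 ht)] using ha.2 t ht
  · simp [indicator_of_notMem (fun h => ht (Set.mem_Ici.1 h))]

lemma norm_indicator_le_one (t : ℝ) : ‖(Set.Ici 0).indicator a t‖ ≤ 1 := by
  have h := ha.indicator_mem_Icc t
  rw [Real.norm_eq_abs, abs_of_nonneg h.1]
  exact h.2

lemma locallyIntegrable_indicator : LocallyIntegrable ((Set.Ici 0).indicator a) :=
  (locallyIntegrable_const (1 : ℝ)).mono (ha.1.indicator measurableSet_Ici).aestronglyMeasurable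
    (ae_of_all _ fun t => by simpa using ha.norm_indicator_le_one t)

lemma intervalIntegrable_indicator (u v : ℝ) :
    IntervalIntegrable ((Set.Ici 0).indicator a) volume u v :=
  (ha.locallyIntegrable_indicator.integrableOn_isCompact isCompact_uIcc).intervalIntegrable

lemma lipschitzWith_cumulative : LipschitzWith 1 (cumulative a) :=
  lipschitzWith_primitive ha.locallyIntegrable_indicator
    (fun t => by simpa using ha.norm_indicator_le_one t) 0

lemma monotone_cumulative : Monotone (cumulative a) :=
  monotone_primitive ha.locallyIntegrable_indicator (fun t => (ha.indicator_mem_Icc t).1) 0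

lemma intervalIntegral_eq_cumulative_sub {u v : ℝ} (hu : 0 ≤ u) (huv : u ≤ v) :
    ∫ s in u..v, a s = cumulative a v - cumulative a u := by
  rw [cumulative, cumulative, intervalIntegral.integral_interval_sub_left
    (ha.intervalIntegrable_indicator 0 v) (ha.intervalIntegrable_indicator 0 u)]
  refine intervalIntegral.integral_congr fun s hs => ?_
  rw [uIcc_of_le huv] at hs
  exact (indicator_of_mem (Set.mem_Ici.2 (hu.trans hs.1)) a).symm

lemma setIntegral_Ici_mul_eq_integral_deriv_cumulative_mul (f : ℝ → ℝ) :
    ∫ t in Set.Ici 0, a t * f t = ∫ t, deriv (cumulative a) t * (Set.Ici 0).indicator f t := by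
  rw [← integral_indicator measurableSet_Ici]
  refine integral_congr_ae ?_
  filter_upwards [LocallyIntegrable.ae_hasDerivAt_integral ha.locallyIntegrable_indicator]
    with t ht
  rw [show deriv (cumulative a) t = _ from (ht 0).deriv, indicator_mul]

end ValidWeight

lemma setIntegral_mul_eq_integral_mul_indicator {α : Type*} [MeasurableSpace α] {ν : Measure α}
    {s : Set α} (hs : MeasurableSet s) (b f : α → ℝ) :
    ∫ t in s, b t * f t ∂ν = ∫ t, b t * s.indicator f t ∂ν := by
  rw [← integral_indicator hs]
  simp_rw [indicator_mul_right]

def laplacianForm {N d : ℕ} (A : Fin N → Fin N → ℝ) (x : Fin N → EuclideanSpace ℝ (Fin d)) :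
    ℝ :=
  (2 * (N : ℝ) ^ 2)⁻¹ * ∑ i : Fin N, ∑ j : Fin N, A i j * ‖x i - x j‖ ^ 2

variable {N d : ℕ}

lemma mVar_nonneg (x : Fin N → EuclideanSpace ℝ (Fin d)) : 0 ≤ mVar x := by
  unfold mVar
  positivity

lemma lambda2_eq_sSup (A : Fin N → Fin N → ℝ) :
    lambda2 d A = sSup {lam : ℝ | ∀ x, lam * mVar x ≤ laplacianForm (d := d) A x} := rfl

-- If all variances vanish, the set defining `λ₂` is `∅` or `univ`; `Real.sSup` of either is `0`.
lemma exists_mVar_pos_of_lambda2_pos {A : Fin N → Fin N → ℝ} (h : 0 < lambda2 d A) :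
    ∃ x : Fin N → EuclideanSpace ℝ (Fin d), 0 < mVar x := by
  by_contra! hx
  have hvar : ∀ x : Fin N → EuclideanSpace ℝ (Fin d), mVar x = 0 :=
    fun x => le_antisymm (hx x) (mVar_nonneg x)
  by_cases hQ : ∀ x : Fin N → EuclideanSpace ℝ (Fin d), 0 ≤ laplacianForm A x <;>
    simp [lambda2_eq_sSup, hvar, hQ] at h

lemma mul_mVar_le_of_le_lambda2 {A : Fin N → Fin N → ℝ} {μ : ℝ} (hμ : 0 < μ)
    (h : μ ≤ lambda2 d A) (x : Fin N → EuclideanSpace ℝ (Fin d)) :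
    μ * mVar x ≤ laplacianForm A x := by
  rw [lambda2_eq_sSup] at h
  set S := {lam : ℝ | ∀ x, lam * mVar x ≤ laplacianForm (d := d) A x}
  have hbdd : BddAbove S := by
    by_contra hS
    rw [Real.sSup_of_not_bddAbove hS] at h
    linarith
  have hne : S.Nonempty := by
    rw [Set.nonempty_iff_ne_empty]
    intro hS
    rw [hS, Real.sSup_empty] at h
    linarith
  have hclosed : IsClosed S := by
    simp only [S, ofPred_forall]
    exact isClosed_iInter fun x => isClosed_le (by fun_prop) continuous_const
  exact (mul_le_mul_of_nonneg_right h (mVar_nonneg x)).trans (hclosed.csSup_mem hne hbdd x)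

lemma le_lambda2_of_forall {A : Fin N → Fin N → ℝ} {μ : ℝ}
    {x₀ : Fin N → EuclideanSpace ℝ (Fin d)} (hx₀ : 0 < mVar x₀)
    (h : ∀ x : Fin N → EuclideanSpace ℝ (Fin d), μ * mVar x ≤ laplacianForm A x) :
    μ ≤ lambda2 d A :=
  le_csSup ⟨laplacianForm A x₀ / mVar x₀, fun _ hlam => (le_div_iff₀ hx₀).2 (hlam x₀)⟩ h

lemma le_lambda2_of_tendsto {M : ℕ → Fin N → Fin N → ℝ} {L : Fin N → Fin N → ℝ} {μ : ℝ}
    (hμ : 0 < μ) (hM : ∀ n, μ ≤ lambda2 d (M n))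
    (hlim : ∀ i j, Tendsto (fun n => M n i j) atTop (𝓝 (L i j))) : μ ≤ lambda2 d L := by
  obtain ⟨x₀, hx₀⟩ := exists_mVar_pos_of_lambda2_pos (hμ.trans_le (hM 0))
  have hQ : ∀ x : Fin N → EuclideanSpace ℝ (Fin d),
      Tendsto (fun n => laplacianForm (M n) x) atTop (𝓝 (laplacianForm L x)) := fun x =>
    (tendsto_finsetSum _ fun i _ => tendsto_finsetSum _ fun j _ =>
      (hlim i j).mul_const _).const_mul _
  exact le_lambda2_of_forall hx₀ fun x =>
    ge_of_tendsto' (hQ x) fun n => mul_mVar_le_of_le_lambda2 hμ (hM n) x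

lemma ae_isBalanced_deriv {K : ℝ≥0} {G : Fin N → Fin N → ℝ → ℝ}
    (hG : ∀ i j, LipschitzWith K (G i j)) (hsum : ∀ i t, ∑ j, G i j t = ∑ j, G j i t) :
    ∀ᵐ t, IsBalanced fun i j => deriv (G i j) t := by
  have hdiff : ∀ᵐ t, ∀ i j, DifferentiableAt ℝ (G i j) t :=
    ae_all_iff.2 fun i => ae_all_iff.2 fun j => (hG i j).ae_differentiableAt
  filter_upwards [hdiff] with t ht i
  calc ∑ j, deriv (G i j) t = deriv (fun s => ∑ j, G i j s) t :=
        (deriv_fun_sum fun j _ => ht i j).symm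
    _ = deriv (fun s => ∑ j, G j i s) t := by rw [funext (hsum i)]
    _ = ∑ j, deriv (G j i) t := deriv_fun_sum fun j _ => ht j i

lemma exists_subseq_tendsto_cumulative {a : ℕ → Fin N → Fin N → ℝ → ℝ}
    (ha : ∀ n, ValidSignal N (a n)) :
    ∃ G : Fin N → Fin N → ℝ → ℝ, (∀ i j, LipschitzWith 1 (G i j)) ∧
      ∃ ψ : ℕ → ℕ, StrictMono ψ ∧
        ∀ i j t, Tendsto (fun n => cumulative (a (ψ n) i j) t) atTop (𝓝 (G i j t)) := by
  have hlip : ∀ n i j, LipschitzWith 1 (cumulative (a n i j)) := fun n i j =>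
    ((ha n).validWeight i j).lipschitzWith_cumulative
  have hbound : ∀ n i j t, ‖cumulative (a n i j) t‖ ≤ |t| := fun n i j t => by
    simpa [cumulative_zero] using (hlip n i j).dist_le_mul t 0
  obtain ⟨G, hG, ψ, hψ, hlim⟩ := exists_subseq_tendsto_of_lipschitzWith
    (F := fun n t i j => cumulative (a n i j) t)
    (fun n x y => edist_pi_le_iff.2 fun i => edist_pi_le_iff.2 fun j => hlip n i j x y)
    (fun t => isBounded_iff_forall_norm_le.2 ⟨|t|, forall_mem_range.2 fun n =>
      pi_norm_le_iff_of_nonneg (abs_nonneg t) |>.2 fun i =>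
        pi_norm_le_iff_of_nonneg (abs_nonneg t) |>.2 fun j => hbound n i j t⟩)
  exact ⟨fun i j t => G t i j,
    fun i j x y => (edist_le_pi_edist _ _ j).trans ((edist_le_pi_edist _ _ i).trans (hG x y)),
    ψ, hψ, fun i j t => tendsto_pi_nhds.1 (tendsto_pi_nhds.1 (hlim t) i) j⟩

namespace ConnectivityPersistent

variable {τ μ : ℝ}

lemma ae_isBalanced_indicator {a : Fin N → Fin N → ℝ → ℝ}
    (h : ConnectivityPersistent N d τ μ a) :
    ∀ᵐ t, IsBalanced fun i j => (Set.Ici 0).indicator (a i j) t := by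
  filter_upwards [h.2.1] with t ht i
  by_cases h0 : 0 ≤ t
  · simpa [indicator_of_mem (Set.mem_Ici.2 h0)] using ht h0 i
  · simp [indicator_of_notMem (fun h => h0 (Set.mem_Ici.1 h))]

lemma sum_cumulative_comm {a : Fin N → Fin N → ℝ → ℝ} (h : ConnectivityPersistent N d τ μ a)
    (i : Fin N) (t : ℝ) : ∑ j, cumulative (a i j) t = ∑ j, cumulative (a j i) t := by
  simp only [cumulative]
  rw [← intervalIntegral.integral_finsetSum fun j _ =>
      (h.1.validWeight i j).intervalIntegrable_indicator 0 t,
    ← intervalIntegral.integral_finsetSum fun j _ =>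
      (h.1.validWeight j i).intervalIntegrable_indicator 0 t]
  exact intervalIntegral.integral_congr_ae (h.ae_isBalanced_indicator.mono fun s hs _ => hs i)

theorem deriv_of_tendsto_cumulative (hτ : 0 < τ) (hμ : 0 < μ) {a : ℕ → Fin N → Fin N → ℝ → ℝ}
    (ha : ∀ n, ConnectivityPersistent N d τ μ (a n)) {G : Fin N → Fin N → ℝ → ℝ}
    (hG : ∀ i j, LipschitzWith 1 (G i j))
    (hlim : ∀ i j t, Tendsto (fun n => cumulative (a n i j) t) atTop (𝓝 (G i j t))) :
    ConnectivityPersistent N d τ μ fun i j => deriv (G i j) := by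
  have hmono : ∀ i j, Monotone (G i j) := fun i j u v huv =>
    le_of_tendsto_of_tendsto' (hlim i j u) (hlim i j v) fun n =>
      ((ha n).1.validWeight i j).monotone_cumulative huv
  have hsum : ∀ i t, ∑ j, G i j t = ∑ j, G j i t := fun i t =>
    tendsto_nhds_unique ((tendsto_finsetSum _ fun j _ => hlim i j t).congr
      fun n => (ha n).sum_cumulative_comm i t) (tendsto_finsetSum _ fun j _ => hlim j i t)
  refine ⟨fun i j => ⟨measurable_deriv _, fun t _ => ⟨(hmono i j).deriv_nonneg, ?_⟩⟩,
    (ae_isBalanced_deriv hG hsum).mono fun t ht _ => ht, fun t ht => ?_⟩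
  · simpa using (le_abs_self _).trans (norm_deriv_le_of_lipschitz (x₀ := t) (hG i j))
  refine le_lambda2_of_tendsto hμ (fun n => (ha n).2.2 t ht) fun i j => ?_
  rw [(hG i j).lipschitzOnWith.absolutelyContinuousOnInterval.integral_deriv_eq_sub]
  simp only [((ha _).1.validWeight i j).intervalIntegral_eq_cumulative_sub ht
    (le_add_of_nonneg_right hτ.le)]
  exact ((hlim i j _).sub (hlim i j t)).const_mul _

end ConnectivityPersistent

end

theorem connectivityPersistent_weakStar_seq_compact_general {N d : ℕ}
    (τ μ : ℝ) (hτ : 0 < τ) (hμ : μ ∈ Set.Ioc (0 : ℝ) 1)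
    (A : ℕ → Fin N → Fin N → ℝ → ℝ)
    (hA : ∀ n, ConnectivityPersistent N d τ μ (A n)) :
    ∃ ψ : ℕ → ℕ, StrictMono ψ ∧
      ∃ B : Fin N → Fin N → ℝ → ℝ, ConnectivityPersistent N d τ μ B ∧
        ∀ i j : Fin N, ∀ f : ℝ → ℝ, IntegrableOn f (Set.Ici (0 : ℝ)) →
          Filter.Tendsto (fun n => ∫ t in Set.Ici (0 : ℝ), A (ψ n) i j t * f t)
            Filter.atTop (nhds (∫ t in Set.Ici (0 : ℝ), B i j t * f t)) := by
  obtain ⟨G, hG, ψ, hψ, hlim⟩ := exists_subseq_tendsto_cumulative fun n => (hA n).1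
  refine ⟨ψ, hψ, fun i j => deriv (G i j),
    ConnectivityPersistent.deriv_of_tendsto_cumulative hτ hμ.1 (fun n => hA (ψ n)) hG hlim,
    fun i j f hf => ?_⟩
  simp only [((hA (ψ _)).1.validWeight i j).setIntegral_Ici_mul_eq_integral_deriv_cumulative_mul,
    setIntegral_mul_eq_integral_mul_indicator measurableSet_Ici]
  exact tendsto_integral_deriv_mul
    (fun n => ((hA (ψ n)).1.validWeight i j).lipschitzWith_cumulative) (hG i j) (hlim i j)
    (hf.integrable_indicator measurableSet_Ici)

/-- sequential weak-* compactness of the set of connectivity-persistent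
balanced signals: any sequence admits a subsequence converging, tested against every
`L¹` function on `[0,∞)` entrywise, to a connectivity-persistent signal. -/
theorem connectivityPersistent_weakStar_seq_compact {N d : ℕ} (hN : 1 ≤ N) (hd : 1 ≤ d)
    (τ μ : ℝ) (hτ : 0 < τ) (hμ : μ ∈ Set.Ioc (0 : ℝ) 1)
    (A : ℕ → Fin N → Fin N → ℝ → ℝ)
    (hA : ∀ n, ConnectivityPersistent N d τ μ (A n)) :
    ∃ ψ : ℕ → ℕ, StrictMono ψ ∧
      ∃ B : Fin N → Fin N → ℝ → ℝ, ConnectivityPersistent N d τ μ B ∧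
        ∀ i j : Fin N, ∀ f : ℝ → ℝ, IntegrableOn f (Set.Ici (0 : ℝ)) →
          Filter.Tendsto (fun n => ∫ t in Set.Ici (0 : ℝ), A (ψ n) i j t * f t)
            Filter.atTop (nhds (∫ t in Set.Ici (0 : ℝ), B i j t * f t)) :=
  connectivityPersistent_weakStar_seq_compact_general τ μ hτ hμ A hA
end
end

section
/- For every pair (τ,μ) with τ > 0 and μ ∈ (0,1], and every compact set K⁰ ⊂ (ℝ^d)^N, there exist positive constants α, γ > 0 such that D(x(t)) ≤ α D(x(0)) e^{−γ t} for all t ≥ 0 and every solution x(·) of the nonlinear multiagent system with x(0) ∈ K⁰ driven by a signal A(·) ∈ G_η(τ,μ). -/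
/-!
For a unit vector `v`, the projections `y_i = ⟪v, x_i⟫` solve the scalar linear consensus system
`ẏ_i = ∑_j β_ij (y_j - y_i)` with weights `β_ij = a_ij φ(|x_i - x_j|) / N ≥ 0`. By the maximum
principle, an interval containing all `y_i(s)` contains all `y_i(t)` for `t ≥ s`, so the diameter
is nonincreasing. Hence the distances stay below the bound `R` of the diameter on `K⁰`, and
`m a_ij / N ≤ β_ij`, `∑_j β_ij ≤ B` where `0 < m ≤ φ ≤ B` on `[0, R]`. On a window `[t, t + τ]`,
scrambling gives any two agents `p, q` a common neighbour `k` with `∫ a_pk, ∫ a_qk ≥ μ τ`. Since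
`e^{B s} y_i(s)` is nondecreasing once the `y_i` are shifted to be nonnegative, `k` pulls `q` up or
`p` down by the fraction `e^{-Bτ} m μ τ / (2N)` of the spread. So the diameter contracts by a fixed
factor `ρ < 1` over each window, which gives exponential decay at rate `γ = -log ρ / τ`.
-/

open MeasureTheory Finset

noncomputable section

open Set Filter Topology
open scoped InnerProductSpace

theorem AbsolutelyContinuousOnInterval.integral_le_sub_of_ae_hasDerivAt_of_le {f g : ℝ → ℝ}
    {a b : ℝ} (hf : AbsolutelyContinuousOnInterval f a b) (hab : a ≤ b)
    (hg : IntervalIntegrable g volume a b)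
    (hfg : ∀ᵐ t, t ∈ Ioo a b → ∃ d, HasDerivAt f d t ∧ g t ≤ d) :
    ∫ t in a..b, g t ≤ f b - f a := by
  rw [← hf.integral_deriv_eq_sub]
  refine intervalIntegral.integral_mono_ae_restrict hab hg hf.intervalIntegrable_deriv ?_
  rw [EventuallyLE, ae_restrict_iff' measurableSet_Icc]
  filter_upwards [hfg, Measure.ae_ne volume a, Measure.ae_ne volume b]
    with t hderiv hta htb ht
  obtain ⟨d, hd, hgd⟩ := hderiv ⟨lt_of_le_of_ne ht.1 hta.symm, lt_of_le_of_ne ht.2 htb⟩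
  rwa [hd.deriv]

theorem LipschitzOnWith.finset_sup'_s8 {α ι : Type*} [PseudoMetricSpace α] {s : Set α}
    {t : Finset ι} (ht : t.Nonempty) {f : ι → α → ℝ} {K : NNReal}
    (hf : ∀ i ∈ t, LipschitzOnWith K (f i) s) :
    LipschitzOnWith K (fun x => t.sup' ht (f · x)) s := by
  refine LipschitzOnWith.of_le_add_mul K fun x hx y hy => Finset.sup'_le _ _ fun i hi => ?_
  calc f i x ≤ f i y + K * dist x y := by
        linarith [Real.sub_le_dist (f i x) (f i y), (hf i hi).dist_le_mul x hx y hy]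
    _ ≤ t.sup' ht (f · y) + K * dist x y := by gcongr; exact Finset.le_sup' (f · y) hi

theorem AntitoneOn.le_exp_mul_exp_neg_of_add_le {D : ℝ → ℝ} {τ γ : ℝ} (hD : AntitoneOn D (Ici 0))
    (hτ : 0 < τ) (hγ : 0 ≤ γ) (hD0 : 0 ≤ D 0)
    (hstep : ∀ t, 0 ≤ t → D (t + τ) ≤ Real.exp (-γ * τ) * D t) {t : ℝ} (ht : 0 ≤ t) :
    D t ≤ Real.exp (γ * τ) * D 0 * Real.exp (-γ * t) := by
  have hiter : ∀ n : ℕ, D (n * τ) ≤ Real.exp (-γ * (n * τ)) * D 0 := by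
    intro n
    induction n with
    | zero => simp
    | succ n ih =>
      calc D ((n + 1 : ℕ) * τ) = D (n * τ + τ) := by push_cast; ring_nf
        _ ≤ Real.exp (-γ * τ) * D (n * τ) := hstep _ (by positivity)
        _ ≤ Real.exp (-γ * τ) * (Real.exp (-γ * (n * τ)) * D 0) := by gcongr
        _ = Real.exp (-γ * ((n + 1 : ℕ) * τ)) * D 0 := by
          rw [← mul_assoc, ← Real.exp_add]; push_cast; ring_nf
  set n := ⌊t / τ⌋₊
  have hnt : n * τ ≤ t := (le_div_iff₀ hτ).1 (Nat.floor_le (by positivity))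
  have htn : t < (n + 1) * τ := (div_lt_iff₀ hτ).1 (Nat.lt_floor_add_one _)
  calc D t ≤ D (n * τ) := hD (mem_Ici.2 (by positivity)) ht hnt
    _ ≤ Real.exp (-γ * (n * τ)) * D 0 := hiter n
    _ ≤ Real.exp (γ * τ + -γ * t) * D 0 := by gcongr; nlinarith
    _ = Real.exp (γ * τ) * D 0 * Real.exp (-γ * t) := by rw [Real.exp_add]; ring

theorem one_sub_exp_neg_mul_div_two_mem_Ioo {s κ : ℝ} (hκ : 0 < κ) (hκs : κ ≤ s) :
    1 - Real.exp (-s) * κ / 2 ∈ Set.Ioo 0 1 := by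
  have hexp : Real.exp (-s) * s < 1 := by
    rw [Real.exp_neg, inv_mul_lt_one₀ (Real.exp_pos _)]
    linarith [Real.add_one_le_exp s]
  have := mul_le_mul_of_nonneg_left hκs (Real.exp_pos (-s)).le
  constructor <;> nlinarith [mul_pos (Real.exp_pos (-s)) hκ]

theorem exists_pos_exp_neg_mul_eq {ρ τ : ℝ} (hρ : ρ ∈ Set.Ioo 0 1) (hτ : 0 < τ) :
    ∃ γ > 0, Real.exp (-γ * τ) = ρ :=
  ⟨-Real.log ρ / τ, div_pos (neg_pos.2 (Real.log_neg hρ.1 hρ.2)) hτ, by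
    rw [neg_div, neg_neg, div_mul_cancel₀ _ hτ.ne', Real.exp_log hρ.1]⟩

theorem mul_le_add_sum_mul_sub {ι : Type*} [Fintype ι] {b w : ι → ℝ} {B : ℝ}
    (hb : ∀ j, 0 ≤ b j) (hB : ∑ j, b j ≤ B) (hw : ∀ j, 0 ≤ w j) (p k : ι) :
    b k * w k ≤ B * w p + ∑ j, b j * (w j - w p) := by
  have hk : b k * w k ≤ ∑ j, b j * w j :=
    Finset.single_le_sum (f := fun j => b j * w j) (fun j _ => mul_nonneg (hb j) (hw j))
      (Finset.mem_univ k)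
  have hp : (∑ j, b j) * w p ≤ B * w p := mul_le_mul_of_nonneg_right hB (hw p)
  simp only [mul_sub, Finset.sum_sub_distrib, ← Finset.sum_mul]
  linarith

section ConsensusSystem

variable {ι : Type*} [Fintype ι]

def IsConsensusSolOn (β : ι → ι → ℝ → ℝ) (y : ι → ℝ → ℝ) (s t : ℝ) : Prop :=
  (∀ i, ∃ K, LipschitzOnWith K (y i) (Icc s t)) ∧
  ∀ᵐ u, u ∈ Ioo s t → ∀ i, HasDerivAt (y i) (∑ j, β i j u * (y j u - y i u)) u

namespace IsConsensusSolOn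

variable {β : ι → ι → ℝ → ℝ} {y : ι → ℝ → ℝ} {s t B : ℝ}

theorem mono (h : IsConsensusSolOn β y s t) {s' t' : ℝ} (hs : s ≤ s') (ht : t' ≤ t) :
    IsConsensusSolOn β y s' t' :=
  ⟨fun i => (h.1 i).imp fun _ hK => hK.mono (Icc_subset_Icc hs ht),
    h.2.mono fun _ hu hu' => hu ⟨hs.trans_lt hu'.1, hu'.2.trans_le ht⟩⟩

theorem const_sub (h : IsConsensusSolOn β y s t) (c : ℝ) :
    IsConsensusSolOn β (fun i u => c - y i u) s t := by
  refine ⟨fun i => (h.1 i).imp fun K hK => ?_, h.2.mono fun u hu hu' i => ?_⟩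
  · exact .of_dist_le_mul fun a ha b hb => by
      rw [dist_sub_left]; exact hK.dist_le_mul a ha b hb
  · refine ((hu hu' i).const_sub c).congr_deriv ?_
    simp only [sub_sub_sub_cancel_left, ← Finset.sum_neg_distrib, ← mul_neg, neg_sub]

theorem sub_const (h : IsConsensusSolOn β y s t) (c : ℝ) :
    IsConsensusSolOn β (fun i u => y i u - c) s t := by
  refine ⟨fun i => (h.1 i).imp fun K hK => ?_, h.2.mono fun u hu hu' i => ?_⟩
  · exact .of_dist_le_mul fun a ha b hb => by
      rw [dist_sub_right]; exact hK.dist_le_mul a ha b hb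
  · refine ((hu hu' i).sub_const c).congr_deriv ?_
    simp only [sub_sub_sub_cancel_right]

theorem absolutelyContinuousOnInterval (h : IsConsensusSolOn β y s t) (hst : s ≤ t) (i : ι) :
    AbsolutelyContinuousOnInterval (y i) s t := by
  obtain ⟨K, hK⟩ := h.1 i
  exact (uIcc_of_le hst ▸ hK).absolutelyContinuousOnInterval

theorem le_of_forall_le (h : IsConsensusSolOn β y s t) (hst : s ≤ t)
    (hβ : ∀ u ∈ Ioo s t, ∀ i j, 0 ≤ β i j u) {M : ℝ} (hM : ∀ j, y j s ≤ M) (i : ι) :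
    y i t ≤ M := by
  have hne : (Finset.univ : Finset ι).Nonempty := ⟨i, Finset.mem_univ i⟩
  set f : ℝ → ℝ := fun u => Finset.univ.sup' hne (y · u) with hf_def
  have hf : AbsolutelyContinuousOnInterval f s t := by
    choose K hK using h.1
    exact (uIcc_of_le hst ▸ LipschitzOnWith.finset_sup'_s8 hne fun j _ =>
      (hK j).weaken (Finset.le_sup (Finset.mem_univ j))).absolutelyContinuousOnInterval
  -- at a point where `y i₀` attains the maximum, `f - y i₀` has a local minimum,
  -- so `f' = y i₀' = ∑ β i₀ j (y j - y i₀) ≤ 0`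
  have hdecr : f t ≤ f s := by
    have := hf.neg.integral_le_sub_of_ae_hasDerivAt_of_le hst intervalIntegrable_const (g := 0) ?_
    · simp only [Pi.zero_apply, intervalIntegral.integral_zero, Pi.neg_apply] at this
      linarith
    filter_upwards [h.2, hf.ae_differentiableAt] with u hy hdiff hu
    obtain ⟨i₀, -, hi₀⟩ := Finset.exists_mem_eq_sup' hne (y · u)
    have hfu := (hdiff (by rw [uIcc_of_le hst]; exact Ioo_subset_Icc_self hu)).hasDerivAt
    have hmin : IsLocalMin (fun w => f w - y i₀ w) u := Eventually.of_forall fun w => by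
      simp only [hf_def, ← hi₀, sub_self, sub_nonneg]
      exact Finset.le_sup' (y · w) (Finset.mem_univ i₀)
    have hderiv := sub_eq_zero.1 (hmin.hasDerivAt_eq_zero (hfu.sub (hy hu i₀)))
    refine ⟨_, hfu.neg, ?_⟩
    rw [hderiv, Pi.zero_apply, neg_nonneg]
    refine Finset.sum_nonpos fun j _ => mul_nonpos_of_nonneg_of_nonpos (hβ u hu i₀ j) ?_
    rw [sub_nonpos, ← hi₀]
    exact Finset.le_sup' (y · u) (Finset.mem_univ j)
  calc y i t ≤ f t := Finset.le_sup' (y · t) (Finset.mem_univ i)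
    _ ≤ f s := hdecr
    _ ≤ M := Finset.sup'_le _ _ fun j _ => hM j

theorem ge_of_forall_ge (h : IsConsensusSolOn β y s t) (hst : s ≤ t)
    (hβ : ∀ u ∈ Ioo s t, ∀ i j, 0 ≤ β i j u) {M : ℝ} (hM : ∀ j, M ≤ y j s) (i : ι) :
    M ≤ y i t := by
  have := (h.const_sub 0).le_of_forall_le hst hβ (M := -M) (fun j => by linarith [hM j]) i
  linarith

theorem sub_le_of_forall_sub_le (h : IsConsensusSolOn β y s t) (hst : s ≤ t)
    (hβ : ∀ u ∈ Ioo s t, ∀ i j, 0 ≤ β i j u) {D : ℝ} (hD : ∀ i j, y i s - y j s ≤ D)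
    (p q : ι) : y p t - y q t ≤ D := by
  have : Nonempty ι := ⟨p⟩
  obtain ⟨j₀, hj₀⟩ := Finite.exists_min (y · s)
  have hp := h.le_of_forall_le hst hβ (M := y j₀ s + D) (fun j => by linarith [hD j j₀]) p
  have hq := h.ge_of_forall_ge hst hβ hj₀ q
  linarith

theorem nonneg_of_forall_nonneg (h : IsConsensusSolOn β y s t)
    (hβ : ∀ u ∈ Ioo s t, ∀ i j, 0 ≤ β i j u) (hy : ∀ j, 0 ≤ y j s) {u : ℝ} (hu : u ∈ Icc s t)
    (i : ι) : 0 ≤ y i u :=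
  (h.mono le_rfl hu.2).ge_of_forall_ge hu.1 (fun v hv => hβ v ⟨hv.1, hv.2.trans_le hu.2⟩) hy i

theorem integral_le_exp_mul_sub (h : IsConsensusSolOn β y s t) (hst : s ≤ t)
    (hβ : ∀ u ∈ Ioo s t, ∀ i j, 0 ≤ β i j u) (hβB : ∀ u ∈ Ioo s t, ∀ i, ∑ j, β i j u ≤ B)
    (hy : ∀ j, 0 ≤ y j s) {g : ℝ → ℝ} (hg : IntervalIntegrable g volume s t) (p k : ι)
    (hgk : ∀ u ∈ Ioo s t, g u ≤ Real.exp (B * (u - s)) * (β p k u * y k u)) :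
    ∫ u in s..t, g u ≤ Real.exp (B * (t - s)) * y p t - y p s := by
  have hexp : AbsolutelyContinuousOnInterval (fun u => Real.exp (B * (u - s))) s t :=
    ContDiffOn.absolutelyContinuousOnInterval (by fun_prop)
  have hF := AbsolutelyContinuousOnInterval.integral_le_sub_of_ae_hasDerivAt_of_le
    (hexp.mul (h.absolutelyContinuousOnInterval hst p)) hst hg ?_
  · simpa using hF
  filter_upwards [h.2] with u hy' hu
  have hexpu : HasDerivAt (fun u => Real.exp (B * (u - s))) (Real.exp (B * (u - s)) * B) u := by
    simpa using (((hasDerivAt_id u).sub_const s).const_mul B).exp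
  refine ⟨_, hexpu.mul (hy' hu p), ?_⟩
  have hdrift := mul_le_add_sum_mul_sub (hβ u hu p) (hβB u hu p)
    (h.nonneg_of_forall_nonneg hβ hy (Ioo_subset_Icc_self hu)) p k
  calc g u ≤ Real.exp (B * (u - s)) * (β p k u * y k u) := hgk u hu
    _ ≤ Real.exp (B * (u - s)) * (B * y p u + ∑ j, β p j u * (y j u - y p u)) := by gcongr
    _ = _ := by ring

theorem le_exp_mul (h : IsConsensusSolOn β y s t) (hst : s ≤ t)
    (hβ : ∀ u ∈ Ioo s t, ∀ i j, 0 ≤ β i j u) (hβB : ∀ u ∈ Ioo s t, ∀ i, ∑ j, β i j u ≤ B)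
    (hy : ∀ j, 0 ≤ y j s) (i : ι) :
    y i s ≤ Real.exp (B * (t - s)) * y i t := by
  have := h.integral_le_exp_mul_sub hst hβ hβB hy intervalIntegrable_const i i (g := 0)
    fun u hu => mul_nonneg (Real.exp_pos _).le
      (mul_nonneg (hβ u hu i i) (h.nonneg_of_forall_nonneg hβ hy (Ioo_subset_Icc_self hu) i))
  simp only [Pi.zero_apply, intervalIntegral.integral_zero] at this
  linarith

theorem mul_integral_le (h : IsConsensusSolOn β y s t) (hst : s ≤ t)
    (hβ : ∀ u ∈ Ioo s t, ∀ i j, 0 ≤ β i j u) (hβB : ∀ u ∈ Ioo s t, ∀ i, ∑ j, β i j u ≤ B)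
    (hy : ∀ j, 0 ≤ y j s) {p k : ι} (hint : IntervalIntegrable (β p k) volume s t) :
    Real.exp (-(B * (t - s))) * (y k s * ∫ u in s..t, β p k u) ≤ y p t := by
  have key := h.integral_le_exp_mul_sub hst hβ hβB hy (hint.const_mul (y k s)) p k fun u hu => by
    have := (h.mono le_rfl hu.2.le).le_exp_mul hu.1.le
      (fun v hv => hβ v ⟨hv.1, hv.2.trans hu.2⟩) (fun v hv => hβB v ⟨hv.1, hv.2.trans hu.2⟩) hy k
    calc y k s * β p k u ≤ Real.exp (B * (u - s)) * y k u * β p k u :=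
          mul_le_mul_of_nonneg_right this (hβ u hu p k)
      _ = _ := by ring
  rw [intervalIntegral.integral_const_mul] at key
  rw [Real.exp_neg, inv_mul_le_iff₀ (Real.exp_pos _)]
  linarith [hy p]

theorem sub_le_mul_of_forall_sub_le (h : IsConsensusSolOn β y s t) (hst : s ≤ t)
    (hβ : ∀ u ∈ Ioo s t, ∀ i j, 0 ≤ β i j u) (hβB : ∀ u ∈ Ioo s t, ∀ i, ∑ j, β i j u ≤ B)
    {D κ : ℝ} (hD : ∀ i j, y i s - y j s ≤ D) (hκ : 0 ≤ κ) {p q k : ι}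
    (hintp : IntervalIntegrable (β p k) volume s t) (hintq : IntervalIntegrable (β q k) volume s t)
    (hκp : κ ≤ ∫ u in s..t, β p k u) (hκq : κ ≤ ∫ u in s..t, β q k u) :
    y p t - y q t ≤ (1 - Real.exp (-(B * (t - s))) * κ / 2) * D := by
  have : Nonempty ι := ⟨p⟩
  obtain ⟨j₀, hj₀⟩ := Finite.exists_min (y · s)
  set lo := y j₀ s
  have hhi : ∀ j, y j s ≤ lo + D := fun j => by linarith [hD j j₀]
  have hp := h.le_of_forall_le hst hβ hhi p
  have hq := h.ge_of_forall_ge hst hβ hj₀ q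
  set E := Real.exp (-(B * (t - s)))
  have hE : 0 < E := Real.exp_pos _
  -- the agent `k` sits in the upper or the lower half of `[lo, lo + D]` at time `s`,
  -- and pulls `q` up, resp. `p` down, by a fixed fraction of `D`
  rcases le_or_gt (lo + D / 2) (y k s) with hk | hk
  · have hlow := (h.sub_const lo).mul_integral_le hst hβ hβB (fun j => by linarith [hj₀ j]) hintq
    have : D / 2 * κ ≤ (y k s - lo) * ∫ u in s..t, β q k u :=
      mul_le_mul (by linarith) hκq hκ (by linarith [hD j₀ j₀])
    nlinarith
  · have hup := (h.const_sub (lo + D)).mul_integral_le hst hβ hβB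
      (fun j => by linarith [hhi j]) hintp
    have : D / 2 * κ ≤ (lo + D - y k s) * ∫ u in s..t, β p k u :=
      mul_le_mul (by linarith) hκp hκ (by linarith [hD j₀ j₀])
    nlinarith

end IsConsensusSolOn

end ConsensusSystem

section Diameter

variable {N d : ℕ}

theorem mDiam_nonneg (x : Fin N → EuclideanSpace ℝ (Fin d)) : 0 ≤ mDiam x :=
  Real.iSup_nonneg fun _ => Real.iSup_nonneg fun _ => norm_nonneg _

theorem norm_sub_le_mDiam (x : Fin N → EuclideanSpace ℝ (Fin d)) (i j : Fin N) :
    ‖x i - x j‖ ≤ mDiam x :=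
  (le_ciSup (Finite.bddAbove_range _) j).trans
    (le_ciSup (f := fun i => ⨆ j, ‖x i - x j‖) (Finite.bddAbove_range _) i)

theorem mDiam_le [NeZero N] {x : Fin N → EuclideanSpace ℝ (Fin d)} {C : ℝ}
    (h : ∀ i j, ‖x i - x j‖ ≤ C) : mDiam x ≤ C :=
  ciSup_le fun i => ciSup_le (h i)

theorem mDiam_le_two_mul_norm [NeZero N] (x : Fin N → EuclideanSpace ℝ (Fin d)) :
    mDiam x ≤ 2 * ‖x‖ :=
  mDiam_le fun i j =>
    (norm_sub_le _ _).trans (by linarith [norm_le_pi_norm x i, norm_le_pi_norm x j])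

theorem inner_sub_inner_le_mDiam (x : Fin N → EuclideanSpace ℝ (Fin d))
    {v : EuclideanSpace ℝ (Fin d)} (hv : ‖v‖ ≤ 1) (i j : Fin N) :
    ⟪v, x i⟫_ℝ - ⟪v, x j⟫_ℝ ≤ mDiam x := by
  rw [← inner_sub_right]
  calc _ ≤ ‖v‖ * ‖x i - x j‖ := real_inner_le_norm _ _
    _ ≤ 1 * mDiam x := mul_le_mul hv (norm_sub_le_mDiam x i j) (norm_nonneg _) zero_le_one
    _ = mDiam x := one_mul _

theorem mDiam_le_mul_of_forall_inner [NeZero N] {x x' : Fin N → EuclideanSpace ℝ (Fin d)} {c : ℝ}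
    (h : ∀ v : EuclideanSpace ℝ (Fin d), ‖v‖ ≤ 1 → ∀ D,
      (∀ i j, ⟪v, x i⟫_ℝ - ⟪v, x j⟫_ℝ ≤ D) → ∀ p q, ⟪v, x' p⟫_ℝ - ⟪v, x' q⟫_ℝ ≤ c * D) :
    mDiam x' ≤ c * mDiam x := by
  refine mDiam_le fun p q => ?_
  set u := x' p - x' q
  have hv : ‖‖u‖⁻¹ • u‖ ≤ 1 := by
    rw [norm_smul, norm_inv, norm_norm]
    exact inv_mul_le_one
  have := h _ hv _ (inner_sub_inner_le_mDiam x hv) p q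
  rwa [← inner_sub_right, real_inner_smul_left, real_inner_self_eq_norm_sq, sq, ← mul_assoc,
    inv_mul_mul_self] at this

end Diameter

section MultiAgent

variable {N d : ℕ}

theorem exists_le_of_le_scrambling {A : Fin N → Fin N → ℝ} {μ : ℝ} (h : μ ≤ scrambling A)
    (p q : Fin N) : ∃ k, μ ≤ A p k ∧ μ ≤ A q k := by
  have : Nonempty (Fin N) := ⟨p⟩
  have hN : (0 : ℝ) < N := by exact_mod_cast p.pos
  have hpq : μ ≤ (N : ℝ)⁻¹ * ∑ k, min (A p k) (A q k) :=
    h.trans <| (ciInf_le (Finite.bddBelow_range _) p).trans (ciInf_le (Finite.bddBelow_range _) q)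
  rw [le_inv_mul_iff₀ hN] at hpq
  obtain ⟨k, -, hk⟩ := Finset.exists_le_of_sum_le Finset.univ_nonempty
    (f := fun _ => μ) (g := fun k => min (A p k) (A q k)) (by simpa using hpq)
  exact ⟨k, le_min_iff.1 hk⟩

theorem ScramblingPersistent.exists_le_integral {τ μ : ℝ} {a : Fin N → Fin N → ℝ → ℝ}
    (ha : ScramblingPersistent N τ μ a) (hτ : 0 < τ) {t : ℝ} (ht : 0 ≤ t) (p q : Fin N) :
    ∃ k, μ * τ ≤ ∫ u in t..t + τ, a p k u ∧ μ * τ ≤ ∫ u in t..t + τ, a q k u := by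
  obtain ⟨k, hp, hq⟩ := exists_le_of_le_scrambling (ha.2 t ht) p q
  exact ⟨k, (le_inv_mul_iff₀ hτ).1 hp |>.trans_eq' (mul_comm _ _),
    (le_inv_mul_iff₀ hτ).1 hq |>.trans_eq' (mul_comm _ _)⟩

theorem ValidSignal.intervalIntegrable {a : Fin N → Fin N → ℝ → ℝ} (ha : ValidSignal N a)
    {s t : ℝ} (hs : 0 ≤ s) (hst : s ≤ t) (i j : Fin N) :
    IntervalIntegrable (a i j) volume s t := by
  refine intervalIntegrable_const (c := (1 : ℝ)).mono_fun' (ha i j).1.aestronglyMeasurable ?_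
  rw [EventuallyLE, ae_restrict_iff' measurableSet_uIoc]
  refine Eventually.of_forall fun u hu => ?_
  rw [uIoc_of_le hst] at hu
  have := (ha i j).2 u (hs.trans hu.1.le)
  rw [Real.norm_of_nonneg this.1]
  exact this.2

theorem ValidKernel.exists_bounds_on_Icc {φ : ℝ → ℝ} (hφ : ValidKernel φ) {R : ℝ} (hR : 0 ≤ R) :
    ∃ m B : ℝ, 0 < m ∧ ∀ r ∈ Icc 0 R, φ r ∈ Icc m B := by
  obtain ⟨rm, hrm, hmin⟩ :=
    isCompact_Icc.exists_isMinOn (nonempty_Icc.2 hR) hφ.1.continuous.continuousOn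
  obtain ⟨rM, -, hmax⟩ :=
    isCompact_Icc.exists_isMaxOn (nonempty_Icc.2 hR) hφ.1.continuous.continuousOn
  exact ⟨φ rm, φ rM, hφ.2 rm hrm.1, fun r hr => ⟨hmin hr, hmax hr⟩⟩

/-- The coefficient of `x_j - x_i` in the velocity of agent `i`. -/
def interactionWeight (a : Fin N → Fin N → ℝ → ℝ) (φ : ℝ → ℝ)
    (x : Fin N → ℝ → EuclideanSpace ℝ (Fin d)) (i j : Fin N) (u : ℝ) : ℝ :=
  (N : ℝ)⁻¹ * (a i j u * φ ‖x i u - x j u‖)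

variable {a : Fin N → Fin N → ℝ → ℝ} {φ : ℝ → ℝ} {x : Fin N → ℝ → EuclideanSpace ℝ (Fin d)}

theorem interactionWeight_nonneg (ha : ValidSignal N a) (hφ : ∀ r, 0 ≤ r → 0 ≤ φ r) {u : ℝ}
    (hu : 0 ≤ u) (i j : Fin N) : 0 ≤ interactionWeight a φ x i j u :=
  mul_nonneg (by positivity) (mul_nonneg ((ha i j).2 u hu).1 (hφ _ (norm_nonneg _)))

theorem interactionWeight_mem_Icc [NeZero N] (ha : ValidSignal N a) {R m B : ℝ} (hm : 0 ≤ m)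
    (hφ : ∀ r ∈ Icc 0 R, φ r ∈ Icc m B) {u : ℝ} (hu : 0 ≤ u)
    (hR : mDiam (fun i => x i u) ≤ R) (i j : Fin N) :
    interactionWeight a φ x i j u ∈ Icc ((N : ℝ)⁻¹ * (m * a i j u)) ((N : ℝ)⁻¹ * B) := by
  have haij := (ha i j).2 u hu
  have hφij := hφ _ ⟨norm_nonneg _, (norm_sub_le_mDiam (fun i => x i u) i j).trans hR⟩
  refine ⟨mul_le_mul_of_nonneg_left ?_ (by positivity),
    mul_le_mul_of_nonneg_left ?_ (by positivity)⟩
  · nlinarith [haij.1, hφij.1]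
  · nlinarith [haij.1, haij.2, hφij.1, hφij.2]

namespace IsMASol

theorem lipschitzOnWith (hx : IsMASol a φ x) (i : Fin N) {s t : ℝ} (hs : 0 ≤ s) :
    ∃ K, LipschitzOnWith K (x i) (Icc s t) :=
  (hx.1 i (|t| + 1) (by positivity)).imp fun _ hK =>
    hK.mono (Icc_subset_Icc hs (by linarith [le_abs_self t]))

theorem isConsensusSolOn_inner (hx : IsMASol a φ x) (v : EuclideanSpace ℝ (Fin d)) {s t : ℝ}
    (hs : 0 ≤ s) :
    IsConsensusSolOn (interactionWeight a φ x) (fun i u => ⟪v, x i u⟫_ℝ) s t := by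
  refine ⟨fun i => (hx.lipschitzOnWith i hs (t := t)).imp' _ fun _ hK =>
    (innerSL ℝ v).lipschitz.comp_lipschitzOnWith hK, hx.2.mono fun u hu hu' i => ?_⟩
  refine ((innerSL ℝ v).hasFDerivAt.comp_hasDerivAt u (hu (hs.trans hu'.1.le) i)).congr_deriv ?_
  simp [interactionWeight, inner_sub_right, Finset.mul_sum, mul_assoc]

theorem intervalIntegrable_interactionWeight (hx : IsMASol a φ x) (ha : ValidSignal N a)
    (hφ : Continuous φ) {s t : ℝ} (hs : 0 ≤ s) (hst : s ≤ t) (i j : Fin N) :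
    IntervalIntegrable (interactionWeight a φ x i j) volume s t := by
  obtain ⟨Ki, hKi⟩ := hx.lipschitzOnWith i hs (t := t)
  obtain ⟨Kj, hKj⟩ := hx.lipschitzOnWith j hs (t := t)
  refine ((ha.intervalIntegrable hs hst i j).mul_continuousOn ?_).const_mul _
  rw [uIcc_of_le hst]
  exact hφ.comp_continuousOn (hKi.continuousOn.sub hKj.continuousOn).norm

theorem mDiam_le_of_le [NeZero N] (hx : IsMASol a φ x) (ha : ValidSignal N a)
    (hφ : ∀ r, 0 ≤ r → 0 ≤ φ r) {s t : ℝ} (hs : 0 ≤ s) (hst : s ≤ t) :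
    mDiam (fun i => x i t) ≤ mDiam (fun i => x i s) := by
  simpa using mDiam_le_mul_of_forall_inner (c := 1) fun v _ D hD p q => by
    simpa using (hx.isConsensusSolOn_inner v hs).sub_le_of_forall_sub_le hst
      (fun u hu => interactionWeight_nonneg ha hφ (hs.trans hu.1.le)) hD p q

theorem mDiam_add_le [NeZero N] (hx : IsMASol a φ x) {τ μ : ℝ}
    (ha : ScramblingPersistent N τ μ a) (hτ : 0 < τ) (hμ : 0 ≤ μ) (hφc : Continuous φ)
    {R m B : ℝ} (hm : 0 ≤ m) (hφ : ∀ r ∈ Icc 0 R, φ r ∈ Icc m B)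
    (hR : ∀ u, 0 ≤ u → mDiam (fun i => x i u) ≤ R) {t : ℝ} (ht : 0 ≤ t) :
    mDiam (fun i => x i (t + τ)) ≤
      (1 - Real.exp (-(B * τ)) * (m * μ * τ / N) / 2) * mDiam (fun i => x i t) := by
  have hst : t ≤ t + τ := by linarith
  have hw : ∀ u ∈ Icc t (t + τ), ∀ i j, interactionWeight a φ x i j u ∈
      Icc ((N : ℝ)⁻¹ * (m * a i j u)) ((N : ℝ)⁻¹ * B) := fun u hu =>
    interactionWeight_mem_Icc ha.1 hm hφ (ht.trans hu.1) (hR u (ht.trans hu.1))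
  have hβ : ∀ u ∈ Ioo t (t + τ), ∀ i j, 0 ≤ interactionWeight a φ x i j u := fun u hu i j =>
    (mul_nonneg (by positivity) (mul_nonneg hm ((ha.1 i j).2 u (ht.trans hu.1.le)).1)).trans
      (hw u (Ioo_subset_Icc_self hu) i j).1
  have hβB : ∀ u ∈ Ioo t (t + τ), ∀ i, ∑ j, interactionWeight a φ x i j u ≤ B := fun u hu i =>
    (Finset.sum_le_sum fun j _ => (hw u (Ioo_subset_Icc_self hu) i j).2).trans_eq (by
      simp [mul_inv_cancel_left₀ (NeZero.ne (N : ℝ))])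
  have hint := hx.intervalIntegrable_interactionWeight ha.1 hφc ht hst
  have hκ : ∀ i k, μ * τ ≤ ∫ u in t..t + τ, a i k u →
      m * μ * τ / N ≤ ∫ u in t..t + τ, interactionWeight a φ x i k u := fun i k hik =>
    calc m * μ * τ / N ≤ (N : ℝ)⁻¹ * (m * ∫ u in t..t + τ, a i k u) := by
          rw [div_eq_inv_mul, mul_assoc m]; gcongr
      _ = ∫ u in t..t + τ, (N : ℝ)⁻¹ * (m * a i k u) := by
          rw [intervalIntegral.integral_const_mul, intervalIntegral.integral_const_mul]
      _ ≤ _ := intervalIntegral.integral_mono_on hst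
          (((ha.1.intervalIntegrable ht hst i k).const_mul m).const_mul _) (hint i k)
          fun u hu => (hw u hu i k).1
  refine mDiam_le_mul_of_forall_inner fun v _ D hD p q => ?_
  obtain ⟨k, hkp, hkq⟩ := ha.exists_le_integral hτ ht p q
  simpa using (hx.isConsensusSolOn_inner v ht).sub_le_mul_of_forall_sub_le hst hβ hβB hD
    (by positivity) (hint p k) (hint q k) (hκ p k hkp) (hκ q k hkq)

end IsMASol

end MultiAgent

/-- exponential diameter decay for scrambling-persistent topologies:
for every `(τ,μ)` and every compact set of initial data there exist `α, γ > 0` such that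
`D(x(t)) ≤ α D(x(0)) e^{−γ t}` along every solution driven by a signal in `G_η(τ,μ)`. -/
theorem exponential_diam_decay_scrambling {N d : ℕ} (hN : 1 ≤ N)
    (τ μ : ℝ) (hτ : 0 < τ) (hμ : μ ∈ Set.Ioc (0 : ℝ) 1)
    (φ : ℝ → ℝ) (hφ : ValidKernel φ)
    (K0 : Set (Fin N → EuclideanSpace ℝ (Fin d))) (hK0 : IsCompact K0) :
    ∃ α γ : ℝ, 0 < α ∧ 0 < γ ∧
      ∀ (a : Fin N → Fin N → ℝ → ℝ) (x : Fin N → ℝ → EuclideanSpace ℝ (Fin d)),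
        ScramblingPersistent N τ μ a → IsMASol a φ x → (fun i => x i 0) ∈ K0 →
        ∀ t : ℝ, 0 ≤ t →
          mDiam (fun i => x i t) ≤ α * mDiam (fun i => x i 0) * Real.exp (-γ * t) := by
  have : NeZero N := ⟨by omega⟩
  obtain ⟨hμ0, hμ1⟩ := hμ
  obtain ⟨C, hC0, hC⟩ := hK0.isBounded.exists_pos_norm_le
  obtain ⟨m, B, hm, hφR⟩ := hφ.exists_bounds_on_Icc (R := 2 * C) (by positivity)
  have hκ : m * μ * τ / N ≤ B * τ := by
    have hmB := hφR 0 ⟨le_rfl, by positivity⟩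
    have hN1 : (1 : ℝ) ≤ N := by exact_mod_cast hN
    have hmμ : m * μ ≤ B * N := by nlinarith [hmB.1.trans hmB.2]
    rw [div_le_iff₀ (by positivity)]
    nlinarith [mul_le_mul_of_nonneg_right hmμ hτ.le]
  obtain ⟨γ, hγ, hγρ⟩ := exists_pos_exp_neg_mul_eq
    (one_sub_exp_neg_mul_div_two_mem_Ioo (by positivity) hκ) hτ
  refine ⟨Real.exp (γ * τ), γ, Real.exp_pos _, hγ, fun a x ha hx hx0 t ht => ?_⟩
  have hanti : AntitoneOn (fun u => mDiam fun i => x i u) (Ici 0) := fun s hs _ _ hsu =>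
    hx.mDiam_le_of_le ha.1 (fun r hr => (hφ.2 r hr).le) hs hsu
  have hR : ∀ u, 0 ≤ u → mDiam (fun i => x i u) ≤ 2 * C := fun u hu =>
    (hanti self_mem_Ici hu hu).trans ((mDiam_le_two_mul_norm _).trans (by linarith [hC _ hx0]))
  exact hanti.le_exp_mul_exp_neg_of_add_le hτ hγ.le (mDiam_nonneg _)
    (fun s hs => hγρ.symm ▸ hx.mDiam_add_le ha hτ hμ0.le hφ.1.continuous hm.le hφR hR hs) ht
end
end
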